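/- arXiv:0709.1500 — 3 statements merged into one kernel-verified Lean document; each statement's English description precedes it below -/
import Mathlib

section
/- Every subset S of ℤ^n has only finitely many minimal elements with respect to the partial order ⊑, where u ⊑ v means |u_i| ≤ |v_i| and u_i·v_i ≥ 0 for all i. -/
/-!
Sending `v ∈ ℤ^n` to its positive and negative parts `(v⁺, v⁻) ∈ ℕ^n × ℕ^n` reflects the order:
if `u⁺ ≤ v⁺` and `u⁻ ≤ v⁻` coordinatewise then `u ⊑ v`. By Dickson's lemma the coordinatewise
order on `(ℕ × ℕ)^n` is a well quasi-order, hence so is `⊑`. The minimal elements of `S` form an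
antichain for `⊑`, and antichains of a well quasi-order are finite.
-/

/-- The partial order `⊑` on `ℤ^n`: `u ⊑ v` iff `|u i| ≤ |v i|` and `u i * v i ≥ 0` for all `i`. -/
def sqle {n : Type*} (u v : n → ℤ) : Prop :=
  ∀ i, |u i| ≤ |v i| ∧ 0 ≤ u i * v i

theorem WellQuasiOrdered.of_map {α β : Type*} {r : α → α → Prop} {s : β → β → Prop}
    (hs : WellQuasiOrdered s) (f : α → β) (hf : ∀ a b, s (f a) (f b) → r a b) :
    WellQuasiOrdered r := fun g ↦
  let ⟨m, n, hmn, hs⟩ := hs (f ∘ g)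
  ⟨m, n, hmn, hf _ _ hs⟩

theorem Int.abs_le_abs_and_mul_nonneg_of_toNat_le {a b : ℤ} (hpos : a.toNat ≤ b.toNat)
    (hneg : (-a).toNat ≤ (-b).toNat) : |a| ≤ |b| ∧ 0 ≤ a * b := by
  refine ⟨by rw [abs_eq_max_neg, abs_eq_max_neg]; omega, ?_⟩
  rcases le_total 0 b with hb | hb
  · exact mul_nonneg (by omega) hb
  · exact mul_nonneg_of_nonpos_of_nonpos (by omega) hb

theorem wellQuasiOrdered_sqle (ι : Type*) [Finite ι] :
    WellQuasiOrdered (sqle : (ι → ℤ) → (ι → ℤ) → Prop) :=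
  (wellQuasiOrdered_le (α := ι → ℕ × ℕ)).of_map (fun v i ↦ ((v i).toNat, (-v i).toNat))
    fun _ _ h i ↦ Int.abs_le_abs_and_mul_nonneg_of_toNat_le (h i).1 (h i).2

theorem isAntichain_setOf_forall_rel_imp_eq {α : Type*} (r : α → α → Prop) (S : Set α) :
    IsAntichain r {v ∈ S | ∀ u ∈ S, r u v → u = v} :=
  fun _ hu _ hv hne huv ↦ hne (hv.2 _ hu.1 huv)

theorem finitely_many_minimal_elements (n : ℕ) (S : Set (Fin n → ℤ)) :
    {v ∈ S | ∀ u ∈ S, sqle u v → u = v}.Finite :=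
  (isAntichain_setOf_forall_rel_imp_eq sqle S).finite_of_wellQuasiOrdered
    (wellQuasiOrdered_sqle (Fin n))
end

section
/- For any integer matrix A (with rows indexed by a finite set), the Graver basis 𝒢(A), defined as the set of ⊑-minimal elements of {x ∈ ℤ^n : Ax = 0, x ≠ 0}, is finite. -/
/-- The Graver basis of an integer matrix `A`: the `⊑`-minimal elements of the set of
nonzero integer vectors in the kernel of `A`. -/
def graverBasis {R C : Type*} [Fintype R] [Fintype C] (A : Matrix R C ℤ) : Set (C → ℤ) :=
  {x | A.mulVec x = 0 ∧ x ≠ 0 ∧ ∀ y : C → ℤ, A.mulVec y = 0 → y ≠ 0 → sqle y x → y = x}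

/-! The map `x ↦ (x⁺, x⁻)` embeds `ℤ^n` into `ℕ^(2n)` so that the componentwise
order pulls back into `⊑`. The Graver basis is a `⊑`-antichain, so its image is an antichain
of `ℕ^(2n)`, which is finite by Dickson's lemma. -/

section PosNeg

variable {ι : Type*}

def posNeg (x : ι → ℤ) : ι ⊕ ι → ℕ :=
  Sum.elim (fun i => (x i).toNat) (fun i => (-x i).toNat)

theorem posNeg_injective : Function.Injective (posNeg (ι := ι)) := by
  intro x y h
  funext i
  have hpos := congrFun h (Sum.inl i)
  have hneg := congrFun h (Sum.inr i)
  simp only [posNeg, Sum.elim_inl, Sum.elim_inr] at hpos hneg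
  omega

theorem sqle_of_posNeg_le {x y : ι → ℤ} (h : posNeg x ≤ posNeg y) : sqle x y := by
  intro i
  have hpos := h (Sum.inl i)
  have hneg := h (Sum.inr i)
  simp only [posNeg, Sum.elim_inl, Sum.elim_inr] at hpos hneg
  rcases lt_trichotomy (x i) 0 with hx | hx | hx
  · have hy : y i < 0 := by omega
    exact ⟨by rw [abs_of_neg hx, abs_of_neg hy]; omega, (mul_pos_of_neg_of_neg hx hy).le⟩
  · simp [hx]
  · have hy : 0 < y i := by omega
    exact ⟨by rw [abs_of_pos hx, abs_of_pos hy]; omega, (mul_pos hx hy).le⟩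

end PosNeg

theorem isAntichain_image_posNeg_graverBasis {R C : Type*} [Fintype R] [Fintype C]
    (A : Matrix R C ℤ) : IsAntichain (· ≤ ·) (posNeg '' graverBasis A) := by
  rintro _ ⟨x, hx, rfl⟩ _ ⟨y, hy, rfl⟩ hne hle
  exact hne <| congrArg posNeg <| hy.2.2 x hx.1 hx.2.1 (sqle_of_posNeg_le hle)

theorem graverBasis_finite {R : Type*} [Fintype R] {n : ℕ} (A : Matrix R (Fin n) ℤ) :
    (graverBasis A).Finite := by
  have hfinite : (posNeg '' graverBasis A).Finite :=
    (isAntichain_image_posNeg_graverBasis A).finite_of_partiallyWellOrderedOn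
      (Set.isPWO_of_wellQuasiOrderedLE _)
  exact hfinite.of_finite_image posNeg_injective.injOn
end

section
/- If x^1, …, x^k are circuits of A = (1,1,1)^{(m)} satisfying a primitive relation Σ_i h_i x^i = 0 (i.e., the h_i are relatively prime positive integers and no k−1 of the x^i satisfy a nontrivial linear relation), then the Graver complexity of A satisfies g(A) ≥ Σ_i h_i. -/
/-- A circuit of an integer matrix `A`: a nonzero integer kernel vector with
inclusion-minimal support whose nonzero entries are relatively prime. -/
def IsCircuit {R C : Type*} [Fintype R] [Fintype C] (A : Matrix R C ℤ) (x : C → ℤ) : Prop :=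
  A.mulVec x = 0 ∧ x ≠ 0 ∧
  (∀ y : C → ℤ, A.mulVec y = 0 → y ≠ 0 →
      Function.support y ⊆ Function.support x → Function.support y = Function.support x) ∧
  (∀ d : ℤ, (∀ i, d ∣ x i) → IsUnit d)

/-- The vertex-edge incidence matrix of the complete bipartite graph `K_{3,m}`,
with rows indexed by vertices `{a,b,c} ⊎ {u_1,…,u_m}` and columns by edges. -/
def incK3 (m : ℕ) : Matrix (Fin 3 ⊕ Fin m) (Fin 3 × Fin m) ℤ :=
  fun v e =>
    match v with
    | Sum.inl a => if a = e.1 then 1 else 0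
    | Sum.inr u => if u = e.2 then 1 else 0

/-- The `n`-fold product `A^{(n)} = (1_n ⊗ I_t) ⊕ (I_n ⊗ A)` of an integer matrix `A`. -/
def nfold {R C : Type*} [DecidableEq C] (A : Matrix R C ℤ) (n : ℕ) :
    Matrix (C ⊕ (Fin n × R)) (Fin n × C) ℤ :=
  fun r c =>
    match r with
    | Sum.inl j => if j = c.2 then 1 else 0
    | Sum.inr (i, r') => if i = c.1 then A r' c.2 else 0

/-- The type of `x ∈ ℤ^{n·t}`: the number of nonzero blocks of `x`. -/
noncomputable def blockType {n : ℕ} {C : Type*} (x : Fin n × C → ℤ) : ℕ :=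
  Nat.card {i : Fin n // ∃ j, x (i, j) ≠ 0}

/-- The Graver complexity of `A`: the supremum of the types of elements of the
Graver bases of all the `n`-fold products `A^{(n)}`, `n ≥ 1` (and `0` if all are empty). -/
noncomputable def graverComplexity {R C : Type*} [Fintype R] [Fintype C] [DecidableEq C]
    (A : Matrix R C ℤ) : ℕ∞ :=
  ⨆ (n : ℕ) (x ∈ graverBasis (nfold A (n + 1))), (blockType x : ℕ∞)

/-- A primitive relation `Σ hᵢ xᵢ = 0`: the coefficients are relatively prime positive
integers and no `k-1` of the vectors satisfy a nontrivial linear relation. -/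
def IsPrimitiveRel {k : ℕ} {V : Type*} [Fintype V] (h : Fin k → ℕ) (x : Fin k → V → ℤ) : Prop :=
  (∀ i, 0 < h i) ∧ (∀ d : ℕ, (∀ i, d ∣ h i) → d = 1) ∧
  (∑ i, (h i : ℤ) • x i = 0) ∧
  (∀ j : Fin k, LinearIndependent ℚ
      (fun i : {i : Fin k // i ≠ j} => fun e : V => (x i.1 e : ℚ)))

/-!
Repeat each circuit `xᵢ` exactly `hᵢ` times as the blocks of a vector `z` of the `n`-fold
product, `n = Σ hᵢ`. The relation makes the block sum vanish, so `z` lies in the kernel, and its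
type is `n`. If `y ⊑ z` is a nonzero kernel element, each block of `y` is `⊑` a circuit, hence
is `0` or that circuit, so the block sum of `y` is a relation `Σ cᵢ xᵢ = 0` with `0 ≤ cᵢ ≤ hᵢ`.
By the primitivity of the relation, the integer relations among the `xᵢ` are the multiples of
`h`, so `c = 0` or `c = h`, i.e. `y = 0` or `y = z`. Thus `z` is a Graver basis element of type `n`.
-/

theorem exists_eq_smul_of_smul_eq_smul {ι : Type*} {v w : ι → ℤ}
    (hv : ∀ d : ℤ, (∀ i, d ∣ v i) → IsUnit d) {a b : ℤ} (hb : b ≠ 0) (hab : b • w = a • v) :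
    ∃ c : ℤ, w = c • v := by
  obtain ⟨g, p, q, hg, hpq, rfl, rfl⟩ :=
    Int.exists_gcd_one' (Int.gcd_pos_of_ne_zero_right a hb)
  have hqw : q • w = p • v := by
    ext i
    have := congrFun hab i
    simp only [Pi.smul_apply, smul_eq_mul] at this ⊢
    have hg0 : (g : ℤ) ≠ 0 := by exact_mod_cast hg.ne'
    apply mul_right_cancel₀ hg0
    linarith
  have hq : IsUnit q := hv q fun i =>
    (Int.isCoprime_iff_gcd_eq_one.mpr hpq).symm.dvd_of_dvd_mul_left
      ⟨w i, by simpa using (congrFun hqw i).symm⟩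
  rcases Int.isUnit_iff.mp hq with rfl | rfl
  · exact ⟨p, by simpa using hqw⟩
  · exact ⟨-p, by rw [neg_smul, ← hqw, neg_one_smul, neg_neg]⟩

namespace IsCircuit

variable {R C : Type*} [Fintype R] [Fintype C] {A : Matrix R C ℤ} {x y : C → ℤ}

theorem exists_eq_smul_of_support_subset (hx : IsCircuit A x) (hy : A.mulVec y = 0)
    (hyx : Function.support y ⊆ Function.support x) : ∃ c : ℤ, y = c • x := by
  obtain ⟨hxA, -, hmin, hcop⟩ := hx
  by_cases hy0 : y = 0
  · exact ⟨0, by simp [hy0]⟩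
  obtain ⟨e, he⟩ := Function.ne_iff.mp hy0
  have hxe : x e ≠ 0 := hyx he
  -- `w` is a kernel vector supported in `supp x` but not at `e`, so minimality forces `w = 0`.
  set w := y e • x - x e • y with hw
  have hw0 : w = 0 := by
    by_contra hw0
    have hwA : A.mulVec w = 0 := by
      rw [hw, Matrix.mulVec_sub, Matrix.mulVec_smul, Matrix.mulVec_smul, hxA, hy]
      simp
    have hwx : Function.support w ⊆ Function.support x := fun i hi hxi => by
      have hyi : y i = 0 := Function.notMem_support.mp fun h => hyx h hxi
      exact hi (by simp [hw, hxi, hyi])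
    have : e ∈ Function.support w := hmin w hwA hw0 hwx ▸ hxe
    simp [hw, mul_comm] at this
  exact exists_eq_smul_of_smul_eq_smul hcop hxe (sub_eq_zero.mp hw0).symm

theorem eq_of_sqle (hx : IsCircuit A x) (hy : A.mulVec y = 0) (hy0 : y ≠ 0) (hyx : sqle y x) :
    y = x := by
  have hyx' : Function.support y ⊆ Function.support x := fun i hi hxi =>
    hi (by simpa [hxi] using (hyx i).1)
  obtain ⟨c, rfl⟩ := hx.exists_eq_smul_of_support_subset hy hyx'
  obtain ⟨e, he⟩ := Function.ne_iff.mp hy0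
  have hc : c ≠ 0 := by rintro rfl; simp at he
  have hxe : 0 < |x e| := abs_pos.mpr (hyx' he)
  have habs := (hyx e).1
  have hsgn := (hyx e).2
  simp only [Pi.smul_apply, smul_eq_mul, abs_mul] at habs hsgn
  have hc1 : |c| ≤ 1 := le_of_mul_le_mul_right (by simpa using habs) hxe
  have hc0 : 0 ≤ c :=
    (mul_nonneg_iff_of_pos_right (mul_self_pos.mpr (hyx' he))).mp (by rwa [← mul_assoc])
  rw [show c = 1 by rw [abs_le] at hc1; omega, one_smul]

end IsCircuit

theorem eq_zero_of_sum_smul_eq_zero_of_linearIndependent {ι V : Type*} [Fintype ι]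
    {x : ι → V → ℤ} {j : ι}
    (hx : LinearIndependent ℚ (fun i : {i : ι // i ≠ j} => fun e : V => (x i.1 e : ℚ)))
    {g : ι → ℤ} (hg : ∑ i, g i • x i = 0) (hgj : g j = 0) : g = 0 := by
  classical
  have hgQ : ∑ i : {i : ι // i ≠ j}, (g i : ℚ) • (fun e : V => (x i.1 e : ℚ)) = 0 := by
    ext e
    have := congrArg (fun v : V → ℤ => (v e : ℚ)) hg
    simpa [Finset.sum_apply, Fintype.sum_eq_add_sum_subtype_ne _ j, hgj] using this
  ext i
  by_cases hij : i = j
  · rw [hij, hgj, Pi.zero_apply]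
  · exact_mod_cast Fintype.linearIndependent_iff.mp hx _ hgQ ⟨i, hij⟩

namespace IsPrimitiveRel

variable {k : ℕ} {V : Type*} [Fintype V] {h : Fin k → ℕ} {x : Fin k → V → ℤ}

theorem smul_eq_smul (hx : IsPrimitiveRel h x) {g : Fin k → ℤ} (hg : ∑ i, g i • x i = 0)
    (j : Fin k) : (h j : ℤ) • g = g j • fun i => (h i : ℤ) := by
  refine sub_eq_zero.mp (eq_zero_of_sum_smul_eq_zero_of_linearIndependent (hx.2.2.2 j) ?_ ?_)
  · simp only [Pi.sub_apply, Pi.smul_apply, smul_eq_mul, sub_smul, mul_smul,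
      Finset.sum_sub_distrib, ← Finset.smul_sum, hg, hx.2.2.1, smul_zero, sub_zero]
  · simp [mul_comm]

theorem eq_zero_or_eq_of_le (hx : IsPrimitiveRel h x) {c : Fin k → ℕ} (hch : c ≤ h)
    (hc : ∑ i, (c i : ℤ) • x i = 0) : c = 0 ∨ c = h := by
  rcases isEmpty_or_nonempty (Fin k) with _ | ⟨⟨j⟩⟩
  · exact Or.inl (Subsingleton.elim _ _)
  have hcop : ∀ d : ℤ, (∀ i, d ∣ (h i : ℤ)) → IsUnit d := fun d hd =>
    Int.isUnit_iff_natAbs_eq.mpr (hx.2.1 _ fun i => by simpa using Int.natAbs_dvd_natAbs.mpr (hd i))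
  obtain ⟨t, ht⟩ := exists_eq_smul_of_smul_eq_smul hcop (by exact_mod_cast (hx.1 j).ne')
    (hx.smul_eq_smul hc j)
  have hcj : (c j : ℤ) = t * h j := by simpa using congrFun ht j
  have hhj : (0 : ℤ) < h j := by exact_mod_cast hx.1 j
  have hcjh : (c j : ℤ) ≤ h j := by exact_mod_cast hch j
  obtain rfl | rfl : t = 0 ∨ t = 1 := by
    have : 0 ≤ t := by nlinarith
    have : t ≤ 1 := by nlinarith
    omega
  · left; ext i; simpa using congrFun ht i
  · right; ext i; simpa using congrFun ht i

end IsPrimitiveRel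

theorem blockType_eq_of_forall_exists_ne_zero {n : ℕ} {C : Type*} {w : Fin n × C → ℤ}
    (hw : ∀ i, ∃ e, w (i, e) ≠ 0) : blockType w = n := by
  rw [blockType, Nat.card_congr (Equiv.subtypeUnivEquiv hw), Nat.card_eq_fintype_card,
    Fintype.card_fin]

section NFold

variable {R C : Type*} [Fintype C] [DecidableEq C] {A : Matrix R C ℤ} {n : ℕ}

theorem nfold_mulVec_eq_zero_iff (w : Fin n × C → ℤ) :
    (nfold A n).mulVec w = 0 ↔
      ∑ i, (fun e => w (i, e)) = 0 ∧ ∀ i, A.mulVec (fun e => w (i, e)) = 0 := by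
  simp only [funext_iff, Sum.forall, Prod.forall, Finset.sum_apply, Pi.zero_apply]
  refine and_congr (forall_congr' fun e => ?_) (forall₂_congr fun i r => ?_) <;>
    simp [Matrix.mulVec, dotProduct, nfold, Fintype.sum_prod_type, ite_mul]

theorem blockType_le_graverComplexity [Fintype R] {w : Fin n × C → ℤ}
    (hw : w ∈ graverBasis (nfold A n)) : (blockType w : ℕ∞) ≤ graverComplexity A := by
  obtain _ | n := n
  · exact absurd (Subsingleton.elim w 0) hw.2.1
  exact le_iSup_of_le n (le_iSup₂_of_le w hw le_rfl)

end NFold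

section Repeat

variable {k : ℕ} (h : Fin k → ℕ)

def blockIndex (j : Fin (∑ i, h i)) : Fin k :=
  (finSigmaFinEquiv.symm j).1

theorem sum_nsmul_blockIndex {M : Type*} [AddCommMonoid M] (ε : Fin (∑ i, h i) → ℕ)
    (f : Fin k → M) :
    ∑ j, ε j • f (blockIndex h j) =
      ∑ i, (∑ b : Fin (h i), ε (finSigmaFinEquiv ⟨i, b⟩)) • f i := by
  rw [← finSigmaFinEquiv.sum_comp, Fintype.sum_sigma]
  simp [blockIndex, Finset.sum_smul]

theorem sum_blockIndex {M : Type*} [AddCommMonoid M] (f : Fin k → M) :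
    ∑ j, f (blockIndex h j) = ∑ i, h i • f i := by
  simpa using sum_nsmul_blockIndex h 1 f

variable {C : Type*} (x : Fin k → C → ℤ)

def repeatBlocks : Fin (∑ i, h i) × C → ℤ :=
  fun p => x (blockIndex h p.1) p.2

variable {h x}

theorem blockType_repeatBlocks (hx : ∀ i, x i ≠ 0) :
    blockType (repeatBlocks h x) = ∑ i, h i :=
  blockType_eq_of_forall_exists_ne_zero fun j => Function.ne_iff.mp (hx (blockIndex h j))

variable {R : Type*} [Fintype C] [DecidableEq C] {A : Matrix R C ℤ}

theorem nfold_mulVec_repeatBlocks (hx : ∀ i, A.mulVec (x i) = 0)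
    (hxh : ∑ i, (h i : ℤ) • x i = 0) : (nfold A _).mulVec (repeatBlocks h x) = 0 := by
  refine (nfold_mulVec_eq_zero_iff _).mpr ⟨?_, fun j => hx (blockIndex h j)⟩
  change ∑ j, x (blockIndex h j) = 0
  simpa only [sum_blockIndex, Nat.cast_smul_eq_nsmul] using hxh

theorem eq_repeatBlocks_of_sqle [Fintype R] (hx : ∀ i, IsCircuit A (x i))
    (hxh : IsPrimitiveRel h x) {y : Fin (∑ i, h i) × C → ℤ} (hy : (nfold A _).mulVec y = 0)
    (hy0 : y ≠ 0) (hyx : sqle y (repeatBlocks h x)) : y = repeatBlocks h x := by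
  classical
  obtain ⟨hsum, hblocks⟩ := (nfold_mulVec_eq_zero_iff y).mp hy
  set ε : Fin (∑ i, h i) → ℕ := fun j => if (fun e => y (j, e)) = 0 then 0 else 1 with hε
  have hε1 : ∀ j, ε j ≤ 1 := fun j => by simp only [hε]; split_ifs <;> omega
  have hyε : ∀ j, (fun e => y (j, e)) = ε j • x (blockIndex h j) := fun j => by
    by_cases hj : (fun e => y (j, e)) = 0
    · simp [hε, hj]
    · simpa [hε, hj] using (hx (blockIndex h j)).eq_of_sqle (hblocks j) hj fun e => hyx (j, e)
  set c : Fin k → ℕ := fun i => ∑ b : Fin (h i), ε (finSigmaFinEquiv ⟨i, b⟩)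
  have hch : c ≤ h := fun i =>
    (Finset.sum_le_card_nsmul _ _ 1 fun b _ => hε1 _).trans (by simp)
  have hc : ∑ i, (c i : ℤ) • x i = 0 := by
    simpa only [Nat.cast_smul_eq_nsmul, c, ← sum_nsmul_blockIndex, ← hyε] using hsum
  have hεc : ∑ j, ε j = ∑ i, c i := by
    simpa using sum_nsmul_blockIndex h ε fun _ => (1 : ℕ)
  rcases hxh.eq_zero_or_eq_of_le hch hc with hc0 | hch
  · refine absurd ?_ hy0
    have hε0 : ∀ j, ε j = 0 := by simpa [hc0] using hεc
    ext ⟨j, e⟩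
    simpa [hε0] using congrFun (hyε j) e
  · have hε1' : ∀ j, ε j = 1 := by
      have := (Finset.sum_eq_sum_iff_of_le (s := Finset.univ) fun j _ => hε1 j).mp
        (by simpa [hch] using hεc)
      simpa using this
    ext ⟨j, e⟩
    simpa [hε1', repeatBlocks] using congrFun (hyε j) e

theorem repeatBlocks_mem_graverBasis [Fintype R] [Nonempty (Fin k)]
    (hx : ∀ i, IsCircuit A (x i)) (hxh : IsPrimitiveRel h x) :
    repeatBlocks h x ∈ graverBasis (nfold A (∑ i, h i)) := by
  refine ⟨nfold_mulVec_repeatBlocks (fun i => (hx i).1) hxh.2.2.1, ?_,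
    fun y hy hy0 hyx => eq_repeatBlocks_of_sqle hx hxh hy hy0 hyx⟩
  have : 0 < ∑ i, h i := Finset.sum_pos (fun i _ => hxh.1 i) Finset.univ_nonempty
  obtain ⟨e, he⟩ := Function.ne_iff.mp (hx (blockIndex h ⟨0, this⟩)).2.1
  exact Function.ne_iff.mpr ⟨(⟨0, this⟩, e), he⟩

end Repeat

/-- If circuits of the incidence matrix of `K_{3,m}` satisfy a primitive relation
`Σ hᵢ xᵢ = 0`, then the Graver complexity of `K_{3,m}` is at least `Σ hᵢ`. -/
theorem graverComplexity_ge_of_primitive_relation {m k : ℕ}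
    (x : Fin k → (Fin 3 × Fin m) → ℤ) (h : Fin k → ℕ)
    (hcirc : ∀ i, IsCircuit (incK3 m) (x i))
    (hprim : IsPrimitiveRel h x) :
    ((∑ i, h i : ℕ) : ℕ∞) ≤ graverComplexity (incK3 m) := by
  rcases isEmpty_or_nonempty (Fin k) with _ | _
  · simp
  rw [← blockType_repeatBlocks fun i => (hcirc i).2.1]
  exact blockType_le_graverComplexity (repeatBlocks_mem_graverBasis hcirc hprim)
end
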